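/- arXiv:1408.2637 — 3 statements merged into one kernel-verified Lean document; each statement's English description precedes it below -/
import Mathlib

section
/- Let V = ℝⁿ and let A₁, A₂ be compact convex bodies in V. Let η : nonempty compact convex sets → ℝ be a function continuous with respect to the Hausdorff distance and bounded, extended by η(∅) = 0. Then the function (x, y) ↦ η((x − A₁) ∩ (y − A₂)) on any compact box in V × V is Riemann integrable, i.e., it is bounded and continuous Lebesgue-almost everywhere. -/
open Pointwise MeasureTheory Metric Topology

abbrev EuSp (n : ℕ) := EuclideanSpace ℝ (Fin n)

lemma mem_singleton_sub' {E : Type*} [AddCommGroup E] {S : Set E} {x z : E} :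
    z ∈ ({x} - S) ↔ x - z ∈ S := by
  simp only [Set.singleton_sub, Set.mem_image]
  constructor
  · rintro ⟨a, ha, rfl⟩; simpa using ha
  · intro h; exact ⟨x - z, h, sub_sub_cancel _ _⟩

lemma mem_singleton_add' {E : Type*} [AddCommGroup E] {S : Set E} {w z : E} :
    z ∈ ({w} + S) ↔ z - w ∈ S := by
  simp only [Set.singleton_add, Set.mem_image]
  constructor
  · rintro ⟨a, ha, rfl⟩; simpa using ha
  · intro h; exact ⟨z - w, h, add_sub_cancel _ _⟩

lemma K_eq' {E : Type*} [AddCommGroup E] (A₁ A₂ : Set E) (x y : E) :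
    ({x} - A₁) ∩ ({y} - A₂) = {x} - (A₁ ∩ ({x - y} + A₂)) := by
  ext z
  rw [Set.mem_inter_iff, mem_singleton_sub', mem_singleton_sub', mem_singleton_sub',
    Set.mem_inter_iff, mem_singleton_add']
  have h : x - z - (x - y) = y - z := by abel
  rw [h]

lemma aux_lsc {E : Type*} [NormedAddCommGroup E] [NormedSpace ℝ E]
    {A₁ A₂ : Set E} (hA₁ : Convex ℝ A₁) (hA₂ : Convex ℝ A₂)
    {R ρ : ℝ} (hR : ∀ a ∈ A₁, ∀ b ∈ A₁, dist a b ≤ R) (hρ : 0 < ρ)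
    {w₀ w : E} (hball : ball w₀ ρ ⊆ A₁ - A₂) (hw : dist w w₀ ≤ ρ / 2)
    {z : E} (hz : z ∈ A₁ ∩ ({w₀} + A₂)) :
    ∃ z' ∈ A₁ ∩ ({w} + A₂), dist z z' ≤ 2 * R / ρ * dist w w₀ := by
  obtain ⟨hz1, hz2⟩ := hz
  rw [mem_singleton_add'] at hz2
  by_cases hw0 : w = w₀
  · subst hw0
    exact ⟨z, ⟨hz1, mem_singleton_add'.2 hz2⟩, by simp⟩
  · have hh : 0 < ‖w - w₀‖ := by
      rw [norm_pos_iff]; exact sub_ne_zero.2 hw0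
    obtain ⟨t, ht_def⟩ : ∃ t : ℝ, t = 2 * ‖w - w₀‖ / ρ := ⟨_, rfl⟩
    have ht0 : 0 < t := by rw [ht_def]; positivity
    have ht1 : t ≤ 1 := by
      rw [ht_def, div_le_one hρ]
      rw [dist_eq_norm] at hw; linarith
    obtain ⟨s, hs_def⟩ : ∃ s : ℝ, s = ρ / (2 * ‖w - w₀‖) := ⟨_, rfl⟩
    obtain ⟨w₁, hw₁_def⟩ : ∃ w₁ : E, w₁ = w₀ + s • (w - w₀) := ⟨_, rfl⟩
    have hts : t * s = 1 := by
      rw [ht_def, hs_def]; field_simp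
    have hw₁ : w₁ ∈ ball w₀ ρ := by
      rw [mem_ball, dist_eq_norm]
      have h1 : w₁ - w₀ = s • (w - w₀) := by rw [hw₁_def]; abel
      have h2 : s * ‖w - w₀‖ = ρ / 2 := by rw [hs_def]; field_simp
      rw [h1, norm_smul, Real.norm_eq_abs, abs_of_pos (by rw [hs_def]; positivity), h2]
      linarith
    obtain ⟨a₁, ha₁, a₂, ha₂, hsub⟩ := Set.mem_sub.1 (hball hw₁)
    have hR0 : 0 ≤ R := le_trans (by simp) (hR z hz1 z hz1)
    refine ⟨(1 - t) • z + t • a₁, ⟨hA₁ hz1 ha₁ (by linarith) ht0.le (by ring), ?_⟩, ?_⟩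
    · rw [mem_singleton_add']
      have hgoal : (1 - t) • z + t • a₁ - w = (1 - t) • (z - w₀) + t • a₂ := by
        have ha' : a₁ = w₁ + a₂ := by rw [← hsub]; abel
        rw [ha', hw₁_def]
        match_scalars <;> linarith [hts]
      rw [hgoal]
      exact hA₂ hz2 ha₂ (by linarith) ht0.le (by ring)
    · have hzz : z - ((1 - t) • z + t • a₁) = t • (z - a₁) := by module
      rw [dist_eq_norm, hzz, norm_smul, Real.norm_eq_abs, abs_of_pos ht0]
      have hza : ‖z - a₁‖ ≤ R := by
        rw [← dist_eq_norm]; exact hR z hz1 a₁ ha₁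
      rw [dist_eq_norm]
      calc t * ‖z - a₁‖ ≤ t * R := by nlinarith
        _ = 2 * R / ρ * ‖w - w₀‖ := by rw [ht_def]; field_simp

lemma aux_K {E : Type*} [NormedAddCommGroup E] [NormedSpace ℝ E]
    {A₁ A₂ : Set E} (hA₁ : Convex ℝ A₁) (hA₂ : Convex ℝ A₂)
    {R ρ : ℝ} (hR : ∀ a ∈ A₁, ∀ b ∈ A₁, dist a b ≤ R) (hρ : 0 < ρ) (hR0 : 0 ≤ R)
    {x y x' y' : E} (hball : ball (x - y) ρ ⊆ A₁ - A₂)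
    (hw : dist (x' - y') (x - y) ≤ ρ / 4) :
    hausdorffDist (({x} - A₁) ∩ ({y} - A₂)) (({x'} - A₁) ∩ ({y'} - A₂)) ≤
      dist x x' + 4 * R / ρ * dist (x' - y') (x - y) := by
  have hd0 : (0:ℝ) ≤ dist (x' - y') (x - y) := dist_nonneg
  have hrpos : (0:ℝ) ≤ dist x x' + 4 * R / ρ * dist (x' - y') (x - y) := by
    have : (0:ℝ) ≤ 4 * R / ρ := by positivity
    nlinarith [dist_nonneg (x := x) (y := x')]
  rw [K_eq' A₁ A₂ x y, K_eq' A₁ A₂ x' y']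
  apply hausdorffDist_le_of_mem_dist hrpos
  · intro z hz
    rw [mem_singleton_sub'] at hz
    obtain ⟨m', hm', hdm⟩ := aux_lsc (w := x' - y') hA₁ hA₂ hR hρ hball (by linarith) hz
    refine ⟨x' - m', mem_singleton_sub'.2 (by simpa using hm'), ?_⟩
    have hz' : z = x - (x - z) := by abel
    rw [hz']
    calc dist (x - (x - z)) (x' - m') ≤ dist x x' + dist (x - z) m' :=
          dist_sub_sub_le _ _ _ _
      _ ≤ dist x x' + 4 * R / ρ * dist (x' - y') (x - y) := by
          have h24 : 2 * R / ρ ≤ 4 * R / ρ := (div_le_div_iff_of_pos_right hρ).2 (by linarith)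
          have : 2 * R / ρ * dist (x' - y') (x - y) ≤ 4 * R / ρ * dist (x' - y') (x - y) :=
            mul_le_mul_of_nonneg_right h24 hd0
          linarith
  · intro z hz
    rw [mem_singleton_sub'] at hz
    have hball' : ball (x' - y') (ρ / 2) ⊆ A₁ - A₂ :=
      (ball_subset_ball' (by linarith)).trans hball
    have hw' : dist (x - y) (x' - y') ≤ ρ / 2 / 2 := by
      rw [dist_comm]; linarith
    obtain ⟨m, hm, hdm⟩ := aux_lsc hA₁ hA₂ hR (by linarith : (0:ℝ) < ρ / 2) hball' hw' hz
    refine ⟨x - m, mem_singleton_sub'.2 (by simpa using hm), ?_⟩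
    have hz' : z = x' - (x' - z) := by abel
    rw [hz', dist_comm]
    calc dist (x - m) (x' - (x' - z)) ≤ dist x x' + dist m (x' - z) := dist_sub_sub_le _ _ _ _
      _ ≤ dist x x' + 4 * R / ρ * dist (x' - y') (x - y) := by
          have heq : 2 * R / (ρ / 2) = 4 * R / ρ := by field_simp; ring
          rw [dist_comm m]
          rw [heq] at hdm
          rw [dist_comm (x - y)] at hdm
          linarith

lemma nonempty_M {E : Type*} [AddCommGroup E] {A₁ A₂ : Set E} {w : E}
    (h : w ∈ A₁ - A₂) : (A₁ ∩ ({w} + A₂)).Nonempty := by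
  obtain ⟨a, ha, b, hb, hab⟩ := Set.mem_sub.1 h
  refine ⟨a, ha, mem_singleton_add'.2 ?_⟩
  have : a - w = b := by rw [← hab]; abel
  rw [this]; exact hb

lemma K_nonempty_imp {E : Type*} [AddCommGroup E] {A₁ A₂ : Set E} {x y : E}
    (h : (({x} - A₁) ∩ ({y} - A₂)).Nonempty) : x - y ∈ A₁ - A₂ := by
  obtain ⟨z, hz1, hz2⟩ := h
  rw [mem_singleton_sub'] at hz1 hz2
  exact Set.mem_sub.2 ⟨x - z, hz1, y - z, hz2, by abel⟩

/-- For compact convex bodies `A₁, A₂ ⊆ ℝⁿ` and a bounded function `η` on sets,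
continuous in the Hausdorff distance on nonempty compact convex sets and with
`η ∅ = 0`, the function `(x,y) ↦ η((x - A₁) ∩ (y - A₂))` is bounded and
continuous Lebesgue-almost everywhere on any compact box, hence Riemann
integrable. -/
theorem riemann_integrable_of_convex_intersection (n : ℕ)
    (A₁ A₂ : Set (EuclideanSpace ℝ (Fin n)))
    (hA₁c : IsCompact A₁) (hA₂c : IsCompact A₂)
    (hA₁ : Convex ℝ A₁) (hA₂ : Convex ℝ A₂)
    (hA₁ne : A₁.Nonempty) (hA₂ne : A₂.Nonempty)
    (η : Set (EuclideanSpace ℝ (Fin n)) → ℝ) (C : ℝ)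
    (hηbd : ∀ S, |η S| ≤ C) (hηempty : η ∅ = 0)
    (hηcont : ∀ ε > 0, ∃ δ > 0, ∀ S T : Set (EuclideanSpace ℝ (Fin n)),
      IsCompact S → Convex ℝ S → S.Nonempty →
      IsCompact T → Convex ℝ T → T.Nonempty →
      hausdorffDist S T < δ → |η S - η T| < ε)
    (Q : Set (EuclideanSpace ℝ (Fin n) × EuclideanSpace ℝ (Fin n)))
    (hQ : IsCompact Q) :
    (∀ p : EuclideanSpace ℝ (Fin n) × EuclideanSpace ℝ (Fin n),
        |η (({p.1} - A₁) ∩ ({p.2} - A₂))| ≤ C) ∧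
    (∀ᵐ p ∂(volume.restrict Q),
        ContinuousAt (fun q : EuclideanSpace ℝ (Fin n) × EuclideanSpace ℝ (Fin n) =>
          η (({q.1} - A₁) ∩ ({q.2} - A₂))) p) := by
  refine ⟨fun p => hηbd _, ?_⟩
  set f : EuSp n × EuSp n → ℝ := fun q => η (({q.1} - A₁) ∩ ({q.2} - A₂)) with hf
  set D : Set (EuSp n) := A₁ - A₂ with hD
  have hDc : IsCompact D := by rw [hD, sub_eq_add_neg]; exact hA₁c.add hA₂c.neg
  have hDconv : Convex ℝ D := hA₁.sub hA₂
  have hDcl : IsClosed D := hDc.isClosed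
  set R : ℝ := diam A₁ with hRdef
  have hR : ∀ a ∈ A₁, ∀ b ∈ A₁, dist a b ≤ R :=
    fun a ha b hb => dist_le_diam_of_mem hA₁c.isBounded ha hb
  have hR0 : (0:ℝ) ≤ R := diam_nonneg
  -- compactness/convexity of the intersection sets
  have hKc : ∀ x y : EuSp n, IsCompact (({x} - A₁) ∩ ({y} - A₂)) := by
    intro x y
    rw [K_eq']
    rw [Set.singleton_sub]
    exact ((hA₁c.inter_right (isCompact_singleton.add hA₂c).isClosed).image
      (continuous_const.sub continuous_id))
  have hKconv : ∀ x y : EuSp n, Convex ℝ (({x} - A₁) ∩ ({y} - A₂)) := by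
    intro x y
    exact ((convex_singleton x).sub hA₁).inter ((convex_singleton y).sub hA₂)
  have hKne : ∀ x y : EuSp n, x - y ∈ D → (({x} - A₁) ∩ ({y} - A₂)).Nonempty := by
    intro x y hxy
    rw [K_eq']
    obtain ⟨m, hm⟩ := nonempty_M (A₁ := A₁) (A₂ := A₂) hxy
    exact ⟨x - m, mem_singleton_sub'.2 (by simpa using hm)⟩
  -- continuity away from the frontier of D
  have hcont : ∀ p : EuSp n × EuSp n, p.1 - p.2 ∉ frontier D → ContinuousAt f p := by
    intro p hp
    by_cases hmem : p.1 - p.2 ∈ D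
    · have hint : p.1 - p.2 ∈ interior D := by
        by_contra h
        exact hp (by rw [hDcl.frontier_eq]; exact ⟨hmem, h⟩)
      obtain ⟨ρ, hρ, hball⟩ := Metric.isOpen_iff.1 isOpen_interior _ hint
      have hball' : ball (p.1 - p.2) ρ ⊆ D := hball.trans interior_subset
      rw [Metric.continuousAt_iff]
      intro ε hε
      obtain ⟨δ, hδ, hη⟩ := hηcont ε hε
      have hc8 : (0:ℝ) ≤ 8 * R / ρ := by positivity
      obtain ⟨c, hc_def⟩ : ∃ c : ℝ, c = 1 + 8 * R / ρ := ⟨_, rfl⟩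
      have hc : 0 < c := by rw [hc_def]; linarith
      refine ⟨min (δ / c) (ρ / 8), lt_min (div_pos hδ hc) (by linarith), ?_⟩
      intro q hq
      have hq1 : dist q p < δ / c := lt_of_lt_of_le hq (min_le_left _ _)
      have hq2 : dist q p < ρ / 8 := lt_of_lt_of_le hq (min_le_right _ _)
      have h1 : dist q.1 p.1 ≤ dist q p := by rw [Prod.dist_eq]; exact le_max_left _ _
      have h2 : dist q.2 p.2 ≤ dist q p := by rw [Prod.dist_eq]; exact le_max_right _ _
      have hw : dist (q.1 - q.2) (p.1 - p.2) ≤ 2 * dist q p :=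
        le_trans (dist_sub_sub_le _ _ _ _) (by linarith)
      have hw4 : dist (q.1 - q.2) (p.1 - p.2) ≤ ρ / 4 := by linarith
      have hK := aux_K (x := p.1) (y := p.2) (x' := q.1) (y' := q.2)
        hA₁ hA₂ hR hρ hR0 hball' hw4
      have hKbd : hausdorffDist (({p.1} - A₁) ∩ ({p.2} - A₂))
          (({q.1} - A₁) ∩ ({q.2} - A₂)) < δ := by
        have hstep : dist p.1 q.1 + 4 * R / ρ * dist (q.1 - q.2) (p.1 - p.2) ≤ c * dist q p := by
          have h4 : (0:ℝ) ≤ 4 * R / ρ := by positivity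
          have : 4 * R / ρ * dist (q.1 - q.2) (p.1 - p.2) ≤ 4 * R / ρ * (2 * dist q p) :=
            mul_le_mul_of_nonneg_left hw h4
          rw [hc_def, dist_comm p.1 q.1]
          have h8 : 4 * R / ρ * (2 * dist q p) = 8 * R / ρ * dist q p := by ring
          rw [h8] at this
          nlinarith
        have hlast : c * dist q p < δ := by
          have := mul_lt_mul_of_pos_left hq1 hc
          rwa [mul_div_cancel₀ _ hc.ne'] at this
        exact lt_of_le_of_lt (le_trans hK hstep) hlast
      have hqD : q.1 - q.2 ∈ D := by
        apply hball'
        rw [mem_ball]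
        linarith
      have := hη _ _ (hKc p.1 p.2) (hKconv p.1 p.2) (hKne _ _ hmem)
        (hKc q.1 q.2) (hKconv q.1 q.2) (hKne _ _ hqD) hKbd
      rw [Real.dist_eq]
      rw [abs_sub_comm] at this
      exact this
    · -- outside D : locally empty intersection, f locally 0
      apply Filter.EventuallyEq.continuousAt (y := (0:ℝ))
      have hopen : IsOpen {q : EuSp n × EuSp n | q.1 - q.2 ∉ D} := by
        rw [show {q : EuSp n × EuSp n | q.1 - q.2 ∉ D} = (fun q : EuSp n × EuSp n => q.1 - q.2) ⁻¹' Dᶜ from rfl]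
        exact hDcl.isOpen_compl.preimage (continuous_fst.sub continuous_snd)
      filter_upwards [hopen.mem_nhds hmem] with q hq
      have : ({q.1} - A₁) ∩ ({q.2} - A₂) = ∅ := by
        rw [← Set.not_nonempty_iff_eq_empty]
        intro hne
        exact hq (K_nonempty_imp hne)
      rw [hf]
      simp only [this, hηempty]
  -- the bad set is contained in the frontier of a convex set, hence null
  set B : Set (EuSp n × EuSp n) := {p : EuSp n × EuSp n | p.1 - p.2 ∈ D} with hB
  have hBconv : Convex ℝ B := by
    have : B = (⇑((LinearMap.fst ℝ (EuSp n) (EuSp n)) - (LinearMap.snd ℝ (EuSp n) (EuSp n)))) ⁻¹' D := rfl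
    rw [this]
    exact hDconv.linear_preimage _
  have hBnull : volume (frontier B) = 0 := by
    haveI := MeasureTheory.Measure.prod.instIsAddHaarMeasure
      (volume : Measure (EuSp n)) (volume : Measure (EuSp n))
    rw [MeasureTheory.Measure.volume_eq_prod]
    exact hBconv.addHaar_frontier _
  have hfr : ∀ p : EuSp n × EuSp n, p.1 - p.2 ∈ frontier D → p ∈ frontier B := by
    intro p hpf
    have hBcl : IsClosed B := hDcl.preimage (continuous_fst.sub continuous_snd)
    rw [hBcl.frontier_eq]
    rw [hDcl.frontier_eq] at hpf
    refine ⟨hpf.1, ?_⟩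
    intro hpi
    apply hpf.2
    rw [mem_interior_iff_mem_nhds]
    have hφ : Continuous (fun u : EuSp n => ((u + p.2, p.2) : EuSp n × EuSp n)) :=
      (continuous_id.add continuous_const).prodMk continuous_const
    have hmemφ : (fun u : EuSp n => ((u + p.2, p.2) : EuSp n × EuSp n)) (p.1 - p.2) ∈ interior B := by
      have : p.1 - p.2 + p.2 = p.1 := by abel
      simpa [this] using hpi
    have hnb : (fun u : EuSp n => ((u + p.2, p.2) : EuSp n × EuSp n)) ⁻¹' interior B ∈ 𝓝 (p.1 - p.2) :=
      (isOpen_interior.preimage hφ).mem_nhds hmemφ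
    apply Filter.mem_of_superset hnb
    intro u hu
    have h1 : ((u + p.2, p.2) : EuSp n × EuSp n) ∈ B := interior_subset hu
    have h2 : u + p.2 - p.2 ∈ D := h1
    simpa using h2
  apply ae_restrict_of_ae
  rw [MeasureTheory.ae_iff]
  apply measure_mono_null _ hBnull
  intro p hp
  simp only [Set.mem_setOf_eq] at hp
  by_contra hpB
  apply hp
  apply hcont
  intro hfrD
  exact hpB (hfr p hfrD)
end

section
/- Let F : [0,∞)² → ℝ be a polynomial function in (λ, ε), and suppose |F(λ, ε)| ≤ C Σ_{j=0}^{n} ε^j λ^{n−j} for all λ, ε ∈ [0,1] and some constant C. Then every monomial λ^a ε^b appearing in F with nonzero coefficient satisfies a + b ≥ n. -/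
open MvPolynomial

lemma key_aux : ∀ (n : ℕ) (p : Polynomial ℝ) (K : ℝ),
    (∀ t ∈ Set.Ioc (0:ℝ) 1, |p.eval t| ≤ K * t ^ n) →
    ∀ k < n, p.coeff k = 0 := by
  intro n
  induction n with
  | zero => intro p K h k hk; omega
  | succ n ih =>
    intro p K h
    have h0 : p.coeff 0 = 0 := by
      have hcont : Filter.Tendsto (fun t => |p.eval t|) (nhdsWithin 0 (Set.Ioi 0)) (nhds |p.eval 0|) :=
        ((continuous_abs.comp p.continuous).tendsto 0).mono_left nhdsWithin_le_nhds
      have htend : Filter.Tendsto (fun t : ℝ => K * t ^ (n+1)) (nhdsWithin 0 (Set.Ioi 0)) (nhds 0) := by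
        have : Filter.Tendsto (fun t : ℝ => K * t ^ (n+1)) (nhds 0) (nhds (K * 0 ^ (n+1))) :=
          (continuous_const.mul (continuous_pow _)).tendsto 0
        simpa using this.mono_left nhdsWithin_le_nhds
      have hmem : Set.Ioc (0:ℝ) 1 ∈ nhdsWithin (0:ℝ) (Set.Ioi 0) :=
        Ioc_mem_nhdsGT_of_mem (by norm_num : (0:ℝ) ∈ Set.Ico (0:ℝ) 1)
      have hbound : ∀ᶠ t in nhdsWithin (0:ℝ) (Set.Ioi 0), |p.eval t| ≤ K * t ^ (n+1) :=
        Filter.eventually_of_mem hmem (fun t ht => h t ht)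
      have hle : |p.eval 0| ≤ 0 := le_of_tendsto_of_tendsto hcont htend hbound
      have : p.eval 0 = 0 := abs_nonpos_iff.mp hle
      rw [Polynomial.coeff_zero_eq_eval_zero]; exact this
    have hp : Polynomial.X * p.divX = p := by
      have := Polynomial.X_mul_divX_add p
      rw [h0] at this; simpa using this
    have hdiv : ∀ t ∈ Set.Ioc (0:ℝ) 1, |(p.divX).eval t| ≤ K * t ^ n := by
      intro t ht
      have h1 := h t ht
      rw [← hp] at h1
      simp only [Polynomial.eval_mul, Polynomial.eval_X, abs_mul, abs_of_pos ht.1] at h1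
      have : t * |(p.divX).eval t| ≤ t * (K * t ^ n) := by
        calc t * |(p.divX).eval t| ≤ K * t ^ (n+1) := h1
        _ = t * (K * t ^ n) := by ring
      exact le_of_mul_le_mul_left this ht.1
    intro k hk
    match k with
    | 0 => exact h0
    | (j+1) =>
      have := ih p.divX K hdiv j (by omega)
      rwa [Polynomial.coeff_divX] at this

/-- If a real polynomial `F(λ, ε)` satisfies `|F(λ,ε)| ≤ C Σ_{j≤n} ε^j λ^{n−j}`
on `[0,1]²`, then every monomial of `F` with nonzero coefficient has total
degree at least `n`. -/
theorem polynomial_low_degree_vanish (n : ℕ) (C : ℝ)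
    (F : MvPolynomial (Fin 2) ℝ)
    (hbd : ∀ lam eps : ℝ, lam ∈ Set.Icc (0:ℝ) 1 → eps ∈ Set.Icc (0:ℝ) 1 →
      |MvPolynomial.eval ![lam, eps] F|
        ≤ C * ∑ j ∈ Finset.range (n + 1), eps ^ j * lam ^ (n - j)) :
    ∀ m : Fin 2 →₀ ℕ, F.coeff m ≠ 0 → n ≤ m 0 + m 1 := by
  intro m hm
  by_contra hcon
  push_neg at hcon
  set d := m 0 + m 1 with hd
  -- the polynomial in t obtained by substituting (λ, ε) = (t, s·t)
  set p : ℝ → Polynomial ℝ := fun s =>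
    ∑ μ ∈ F.support, Polynomial.C (F.coeff μ * s ^ (μ 1)) * Polynomial.X ^ (μ 0 + μ 1) with hpdef
  have heval : ∀ s t : ℝ, (p s).eval t = MvPolynomial.eval ![t, s*t] F := by
    intro s t
    rw [hpdef]
    rw [Polynomial.eval_finset_sum, MvPolynomial.eval_eq']
    refine Finset.sum_congr rfl fun μ _ => ?_
    simp only [Polynomial.eval_mul, Polynomial.eval_C, Polynomial.eval_pow, Polynomial.eval_X,
      Fin.prod_univ_two, Matrix.cons_val_zero, Matrix.cons_val_one, Matrix.head_cons]
    rw [mul_pow, pow_add]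
    ring
  have hbound : ∀ s ∈ Set.Icc (0:ℝ) 1, ∀ t ∈ Set.Ioc (0:ℝ) 1,
      |(p s).eval t| ≤ (|C| * (n+1)) * t ^ n := by
    intro s hs t ht
    rw [heval]
    have h1le : s * t ≤ 1 := by
      calc s * t ≤ 1 * 1 := mul_le_mul hs.2 ht.2 ht.1.le zero_le_one
      _ = 1 := one_mul 1
    have hst : s * t ∈ Set.Icc (0:ℝ) 1 := Set.mem_Icc.mpr ⟨mul_nonneg hs.1 ht.1.le, h1le⟩
    have h1 := hbd t (s*t) ⟨ht.1.le, ht.2⟩ hst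
    have hsum_nonneg : (0:ℝ) ≤ ∑ j ∈ Finset.range (n + 1), (s*t) ^ j * t ^ (n - j) :=
      Finset.sum_nonneg fun j _ =>
        mul_nonneg (pow_nonneg hst.1 _) (pow_nonneg ht.1.le _)
    have hsum_le : ∑ j ∈ Finset.range (n + 1), (s*t) ^ j * t ^ (n - j) ≤ (n+1) * t ^ n := by
      have : ∀ j ∈ Finset.range (n + 1), (s*t) ^ j * t ^ (n - j) ≤ t ^ n := by
        intro j hj
        have hjn : j ≤ n := by simpa [Nat.lt_succ_iff] using hj
        have htn : t ^ j * t ^ (n - j) = t ^ n := by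
          rw [← pow_add]; congr 1; omega
        calc (s*t) ^ j * t ^ (n - j) = s ^ j * (t ^ j * t ^ (n - j)) := by rw [mul_pow]; ring
        _ = s ^ j * t ^ n := by rw [htn]
        _ ≤ 1 * t ^ n := by
            exact mul_le_mul_of_nonneg_right (pow_le_one₀ hs.1 hs.2) (pow_nonneg ht.1.le _)
        _ = t ^ n := one_mul _
      calc ∑ j ∈ Finset.range (n + 1), (s*t) ^ j * t ^ (n - j)
          ≤ ∑ _j ∈ Finset.range (n + 1), t ^ n := Finset.sum_le_sum this
        _ = (n+1) * t ^ n := by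
            rw [Finset.sum_const, Finset.card_range, nsmul_eq_mul]; push_cast; ring
    calc |MvPolynomial.eval ![t, s*t] F| ≤ C * ∑ j ∈ Finset.range (n + 1), (s*t) ^ j * t ^ (n - j) := h1
      _ ≤ |C| * ∑ j ∈ Finset.range (n + 1), (s*t) ^ j * t ^ (n - j) :=
          mul_le_mul_of_nonneg_right (le_abs_self C) hsum_nonneg
      _ ≤ |C| * ((n+1) * t ^ n) := mul_le_mul_of_nonneg_left hsum_le (abs_nonneg C)
      _ = (|C| * (n+1)) * t ^ n := by ring
  -- for each s ∈ [0,1], the coefficient of t^d in p s vanishes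
  have hcoeffd : ∀ s ∈ Set.Icc (0:ℝ) 1, (p s).coeff d = 0 := fun s hs =>
    key_aux n (p s) (|C| * (n+1)) (hbound s hs) d hcon
  -- the coefficient of t^d in p s, as a polynomial in s
  set q : Polynomial ℝ :=
    ∑ μ ∈ F.support, if μ 0 + μ 1 = d then Polynomial.C (F.coeff μ) * Polynomial.X ^ (μ 1) else 0
    with hqdef
  have hqeval : ∀ s : ℝ, q.eval s = (p s).coeff d := by
    intro s
    rw [hqdef, hpdef]
    rw [Polynomial.eval_finset_sum, Polynomial.finset_sum_coeff]
    refine Finset.sum_congr rfl fun μ _ => ?_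
    by_cases hμ : μ 0 + μ 1 = d
    · rw [if_pos hμ, hμ, Polynomial.eval_mul, Polynomial.eval_C, Polynomial.eval_pow,
        Polynomial.eval_X, Polynomial.coeff_C_mul, Polynomial.coeff_X_pow, if_pos rfl, mul_one]
    · rw [if_neg hμ, Polynomial.eval_zero, Polynomial.coeff_C_mul, Polynomial.coeff_X_pow,
        if_neg (Ne.symm hμ), mul_zero]
  have hq0 : q = 0 := by
    apply Polynomial.eq_zero_of_infinite_isRoot
    have hinf : (Set.Icc (0:ℝ) 1).Infinite :=
      Set.infinite_coe_iff.mp (Set.Icc.infinite (by norm_num : (0:ℝ) < 1))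
    refine hinf.mono ?_
    intro s hs
    show q.IsRoot s
    rw [Polynomial.IsRoot, hqeval s, hcoeffd s hs]
  have hm_supp : m ∈ F.support := MvPolynomial.mem_support_iff.mpr hm
  have hqc : q.coeff (m 1) = F.coeff m := by
    have hside : ∀ μ ∈ F.support, μ ≠ m →
        (if μ 0 + μ 1 = d then Polynomial.C (F.coeff μ) * Polynomial.X ^ (μ 1) else 0).coeff (m 1)
          = 0 := by
      intro μ _ hne
      by_cases h1 : μ 0 + μ 1 = d
      · rw [if_pos h1, Polynomial.coeff_C_mul, Polynomial.coeff_X_pow]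
        rw [if_neg, mul_zero]
        intro h2
        apply hne
        ext i
        fin_cases i <;> simp <;> omega
      · rw [if_neg h1, Polynomial.coeff_zero]
    rw [hqdef, Polynomial.finset_sum_coeff, Finset.sum_eq_single_of_mem m hm_supp hside,
      if_pos hd.symm, Polynomial.coeff_C_mul, Polynomial.coeff_X_pow, if_pos rfl, mul_one]
  rw [hq0] at hqc
  simp at hqc
  exact hm hqc.symm
end

section
/- Let M ⊆ ℝᵐ × ℝᵏ be a closed convex set and q : ℝᵐ × ℝᵏ → ℝᵐ the projection, with q|_M proper. Then the set-valued map x ↦ M ∩ q⁻¹(x) (a compact convex subset of {x} × ℝᵏ, identified with a subset of ℝᵏ) is continuous in the Hausdorff metric at every point x in the interior of q(M). -/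
open Metric

/-- Fibers of a closed convex set under a proper projection vary
Hausdorff-continuously over the interior of the projection. -/
theorem fibers_hausdorff_continuous (m k : ℕ)
    (M : Set (EuclideanSpace ℝ (Fin m) × EuclideanSpace ℝ (Fin k)))
    (hMclosed : IsClosed M) (hMconv : Convex ℝ M)
    (hproper : ∀ S : Set (EuclideanSpace ℝ (Fin m)), IsCompact S →
      IsCompact {p | p ∈ M ∧ p.1 ∈ S}) :
    ∀ x ∈ interior (Prod.fst '' M),
      ∀ ε > 0, ∃ δ > 0, ∀ x' : EuclideanSpace ℝ (Fin m), dist x' x < δ →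
        hausdorffDist {z : EuclideanSpace ℝ (Fin k) | (x', z) ∈ M}
          {z : EuclideanSpace ℝ (Fin k) | (x, z) ∈ M} < ε := by
  intro x hx ε hε
  rw [mem_interior_iff_mem_nhds] at hx
  obtain ⟨r, hr0, hrball⟩ := Metric.nhds_basis_closedBall.mem_iff.1 hx
  have hKcomp : IsCompact {p | p ∈ M ∧ p.1 ∈ closedBall x r} :=
    hproper _ (isCompact_closedBall x r)
  obtain ⟨R₀, hR₀⟩ := isBounded_iff_forall_norm_le.1 hKcomp.isBounded
  set R : ℝ := max R₀ 0 with hRdef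
  have hR0 : 0 ≤ R := le_max_right _ _
  have hR : ∀ p : EuclideanSpace ℝ (Fin m) × EuclideanSpace ℝ (Fin k),
      p ∈ M → p.1 ∈ closedBall x r → ‖p.2‖ ≤ R := fun p h1 h2 =>
    (norm_snd_le p).trans ((hR₀ p ⟨h1, h2⟩).trans (le_max_left _ _))
  set δ : ℝ := min r (ε * r / (2 * (2 * R + 1))) with hδdef
  have hδ0 : 0 < δ := lt_min hr0 (by positivity)
  refine ⟨δ, hδ0, fun x' hx' => ?_⟩
  have hdr : dist x' x ≤ r := (hx'.trans_le (min_le_left _ _)).le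
  -- arithmetic bound
  have bound : ∀ t : ℝ, 0 ≤ t → t * r ≤ dist x' x → t * (2 * R) ≤ ε / 2 := by
    intro t ht htr
    have h1 : δ ≤ ε * r / (2 * (2 * R + 1)) := min_le_right _ _
    have h2 : δ * (2 * (2 * R + 1)) ≤ ε * r := (le_div_iff₀ (by positivity)).1 h1
    have h3 : t * r ≤ δ := htr.trans hx'.le
    nlinarith [mul_le_mul_of_nonneg_right h3 (by linarith : (0:ℝ) ≤ 2 * R)]
  -- key convexity step
  have main : ∀ (x₁ x₂ : EuclideanSpace ℝ (Fin m)) (z₁ : EuclideanSpace ℝ (Fin k))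
      (y : EuclideanSpace ℝ (Fin m)) (t : ℝ), (x₁, z₁) ∈ M → x₁ ∈ closedBall x r →
      y ∈ closedBall x r → 0 ≤ t → t ≤ 1 → (1 - t) • x₁ + t • y = x₂ →
      ∃ z₂, (x₂, z₂) ∈ M ∧ dist z₂ z₁ ≤ t * (2 * R) := by
    intro x₁ x₂ z₁ y t hz₁ hx₁ hy ht0 ht1 hcomb
    obtain ⟨p, hpM, hp1⟩ := hrball hy
    refine ⟨(1 - t) • z₁ + t • p.2, ?_, ?_⟩
    · have hmem := hMconv hz₁ hpM (by linarith : (0:ℝ) ≤ 1 - t) ht0 (by ring)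
      have hEq : (1 - t) • ((x₁, z₁) : EuclideanSpace ℝ (Fin m) × EuclideanSpace ℝ (Fin k))
          + t • p = (x₂, (1 - t) • z₁ + t • p.2) := by
        rw [Prod.ext_iff]
        constructor
        · simpa [hp1] using hcomb
        · simp
      rwa [hEq] at hmem
    · have hw : ‖p.2‖ ≤ R := hR p hpM (hp1 ▸ hy)
      have hz : ‖z₁‖ ≤ R := hR (x₁, z₁) hz₁ hx₁
      have h4 : (1 - t) • z₁ + t • p.2 - z₁ = t • (p.2 - z₁) := by module
      rw [dist_eq_norm, h4, norm_smul, Real.norm_of_nonneg ht0]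
      have h5 : ‖p.2 - z₁‖ ≤ 2 * R := by
        calc ‖p.2 - z₁‖ ≤ ‖p.2‖ + ‖z₁‖ := norm_sub_le _ _
        _ ≤ 2 * R := by linarith
      nlinarith
  have hxball : x ∈ closedBall x r := mem_closedBall_self hr0.le
  have hx'ball : x' ∈ closedBall x r := by rwa [mem_closedBall]
  by_cases hxx : x' = x
  · subst hxx
    simpa [hausdorffDist_self_zero] using hε
  have hd0 : 0 < dist x' x := dist_pos.2 hxx
  set d : ℝ := dist x' x with hddef
  have hd' : d ≠ 0 := ne_of_gt hd0
  have hH : hausdorffDist {z : EuclideanSpace ℝ (Fin k) | (x', z) ∈ M}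
      {z : EuclideanSpace ℝ (Fin k) | (x, z) ∈ M} ≤ ε / 2 := by
    apply hausdorffDist_le_of_mem_dist (by positivity)
    · -- from fiber over x' to fiber over x
      intro z' hz'
      set t : ℝ := d / (d + r) with htdef
      have ht0 : 0 ≤ t := by positivity
      have ht1 : t ≤ 1 := by
        rw [htdef, div_le_one (by positivity)]; linarith
      have htr : t * r ≤ d := by
        rw [htdef, div_mul_eq_mul_div, div_le_iff₀ (by positivity)]
        nlinarith
      have hy : x + (r / d) • (x - x') ∈ closedBall x r := by
        rw [mem_closedBall, dist_eq_norm]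
        have h6 : x + (r / d) • (x - x') - x = (r / d) • (x - x') := by module
        rw [h6, norm_smul, Real.norm_of_nonneg (by positivity)]
        rw [← dist_eq_norm, dist_comm, ← hddef]
        rw [div_mul_cancel₀ _ hd']
      have hcomb : (1 - t) • x' + t • (x + (r / d) • (x - x')) = x := by
        rw [htdef]
        match_scalars <;> field_simp <;> ring
      obtain ⟨z₂, hz₂M, hz₂d⟩ := main x' x z' _ t hz' hx'ball hy ht0 ht1 hcomb
      exact ⟨z₂, hz₂M, by
        rw [dist_comm] at hz₂d
        exact hz₂d.trans (bound t ht0 htr)⟩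
    · -- from fiber over x to fiber over x'
      intro z hz
      set t : ℝ := d / r with htdef
      have ht0 : 0 ≤ t := by positivity
      have ht1 : t ≤ 1 := by
        rw [htdef, div_le_one hr0]; exact hdr
      have htr : t * r ≤ d := by
        rw [htdef, div_mul_cancel₀ _ (ne_of_gt hr0)]
      have hy : x + (r / d) • (x' - x) ∈ closedBall x r := by
        rw [mem_closedBall, dist_eq_norm]
        have h6 : x + (r / d) • (x' - x) - x = (r / d) • (x' - x) := by module
        rw [h6, norm_smul, Real.norm_of_nonneg (by positivity)]
        rw [← dist_eq_norm, ← hddef]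
        rw [div_mul_cancel₀ _ hd']
      have hcomb : (1 - t) • x + t • (x + (r / d) • (x' - x)) = x' := by
        rw [htdef]
        match_scalars <;> field_simp <;> ring
      obtain ⟨z₂, hz₂M, hz₂d⟩ := main x x' z _ t hz hxball hy ht0 ht1 hcomb
      exact ⟨z₂, hz₂M, by
        rw [dist_comm]
        exact hz₂d.trans (bound t ht0 htr)⟩
  exact hH.trans_lt (by linarith)
end
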